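/- Let G be a k-graph on n vertices such that at most δ·(n choose ℓ) of the ℓ-element vertex sets X satisfy deg_G(X) < (μ+η)·(n−ℓ choose k−ℓ). Let Q ≥ 2ℓ and choose a uniformly random set S ⊆ V(G) with |S| = Q. Then with probability at least 1 − (Q choose ℓ)·(δ + e^{−η²Q/(4k²)}), the induced subgraph G[S] satisfies δ_ℓ(G[S]) ≥ (μ + η/2)·(Q−ℓ choose k−ℓ). -/

import Mathlib

/-!
Fix an `ℓ`-set `X`. The degree of `X` in `G[S]` is the number of edges of the link of `X` that
lie inside the uniformly random `(Q - ℓ)`-set `S \ X`. Swapping one element of that set changes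
the count by at most `(Q-ℓ-1 choose k-ℓ-1)`, so revealing its elements one at a time and applying
Hoeffding's lemma at every step (a McDiarmid inequality on the slice) shows that an `ℓ`-set of
degree at least `(μ + η)·(n-ℓ choose k-ℓ)` drops below `(μ + η/2)·(Q-ℓ choose k-ℓ)` in `G[S]`
with probability at most `exp (-η²(Q-ℓ)/(2(k-ℓ)²)) ≤ exp (-η²Q/(4k²))`, using `Q ≥ 2ℓ`.
A union bound over the `ℓ`-sets, counting the at most `δ·(n choose ℓ)` low-degree ones
trivially, gives the claim.
-/

open Finset Real MeasureTheory ProbabilityTheory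
open scoped BigOperators

theorem Finset.expect_exp_mul_le_of_mem_Icc {ι : Type*} {s : Finset ι} (hs : s.Nonempty) {x : ι → ℝ}
    {a b : ℝ} (hx : ∀ i ∈ s, x i ∈ Set.Icc a b) (t : ℝ) :
    𝔼 i ∈ s, exp (t * x i) ≤ exp (t * (𝔼 i ∈ s, x i) + t ^ 2 * (b - a) ^ 2 / 8) := by
  let _ : MeasurableSpace s := ⊤
  have : Nonempty s := hs.to_subtype
  set μ := (PMF.uniformOfFintype s).toMeasure
  have integral_eq (f : ι → ℝ) : ∫ i, f i ∂μ = 𝔼 i ∈ s, f i := by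
    rw [PMF.integral_eq_sum, expect_eq_sum_div_card, ← sum_coe_sort s, sum_div]
    simp [PMF.uniformOfFintype_apply, div_eq_inv_mul]
  have hoeffding := (hasSubgaussianMGF_of_mem_Icc (μ := μ) (X := fun i : s => x i)
    measurable_from_top.aemeasurable (ae_of_all _ fun i => hx i i.2)).mgf_le t
  rw [mgf, integral_eq (fun i => exp (t * (x i - ∫ j, x j ∂μ))), integral_eq] at hoeffding
  have hsq : ((‖b - a‖₊ / 2) ^ 2 : NNReal) * t ^ 2 / 2 = t ^ 2 * (b - a) ^ 2 / 8 := by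
    push_cast
    rw [Real.norm_eq_abs, div_pow, sq_abs]
    ring
  calc 𝔼 i ∈ s, exp (t * x i)
      = exp (t * 𝔼 i ∈ s, x i) * 𝔼 i ∈ s, exp (t * (x i - 𝔼 j ∈ s, x j)) := by
        rw [mul_expect]
        refine expect_congr rfl fun i _ => ?_
        rw [← exp_add]
        ring_nf
    _ ≤ exp (t * 𝔼 i ∈ s, x i) * exp (t ^ 2 * (b - a) ^ 2 / 8) := by
        rw [← hsq]; gcongr
    _ = _ := (exp_add _ _).symm

theorem Finset.expect_exp_mul_le_of_abs_sub_le {ι : Type*} {s : Finset ι} (hs : s.Nonempty)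
    {x : ι → ℝ} {c : ℝ} (hx : ∀ i ∈ s, ∀ j ∈ s, |x i - x j| ≤ c) (t : ℝ) :
    𝔼 i ∈ s, exp (t * x i) ≤ exp (t * (𝔼 i ∈ s, x i) + t ^ 2 * c ^ 2 / 8) := by
  obtain ⟨i₀, hi₀, hmin⟩ := s.exists_mem_eq_inf' hs x
  have hIcc : ∀ i ∈ s, x i ∈ Set.Icc (x i₀) (x i₀ + c) := fun i hi =>
    ⟨hmin ▸ inf'_le x hi, by linarith [le_abs_self (x i - x i₀), hx i hi i₀ hi₀]⟩
  simpa using expect_exp_mul_le_of_mem_Icc hs hIcc t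

lemma card_filter_mul_exp_le_sum {ι : Type*} (s : Finset ι) (g : ι → ℝ) {lam : ℝ} (hlam : 0 ≤ lam)
    (θ : ℝ) : #(s.filter (g · ≤ θ)) * exp (-(lam * θ)) ≤ ∑ i ∈ s, exp (-(lam * g i)) :=
  calc #(s.filter (g · ≤ θ)) * exp (-(lam * θ))
      = ∑ _i ∈ s.filter (g · ≤ θ), exp (-(lam * θ)) := by rw [sum_const, nsmul_eq_mul]
    _ ≤ ∑ i ∈ s.filter (g · ≤ θ), exp (-(lam * g i)) := sum_le_sum fun i hi =>
        exp_le_exp.2 <| neg_le_neg <| mul_le_mul_of_nonneg_left (mem_filter.1 hi).2 hlam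
    _ ≤ ∑ i ∈ s, exp (-(lam * g i)) :=
        sum_le_sum_of_subset_of_nonneg (filter_subset _ _) fun _ _ _ => (exp_pos _).le

section Slice

variable {α : Type*} [DecidableEq α]

-- The uniform random `q`-subset `T` of `W` conditioned on the event `A ⊆ T`.
def extensions (W : Finset α) (q : ℕ) (A : Finset α) : Finset (Finset α) :=
  (W.powersetCard q).filter (A ⊆ ·)

variable {W A T : Finset α} {q : ℕ}

@[simp] lemma mem_extensions : T ∈ extensions W q A ↔ (T ⊆ W ∧ #T = q) ∧ A ⊆ T := by
  rw [extensions, mem_filter, mem_powersetCard]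

lemma extensions_empty : extensions W q ∅ = W.powersetCard q :=
  filter_true_of_mem fun _ _ => empty_subset _

lemma extensions_of_card_eq (hA : A ⊆ W) (hAq : #A = q) : extensions W q A = {A} := by
  ext T
  simp only [mem_extensions, mem_singleton]
  refine ⟨fun h => (eq_of_subset_of_card_le h.2 (by omega)).symm, ?_⟩
  rintro rfl
  exact ⟨⟨hA, hAq⟩, subset_rfl⟩

lemma extensions_insert (v : α) :
    extensions W q (insert v A) = (extensions W q A).filter (v ∈ ·) := by
  ext T
  simp only [mem_extensions, mem_filter, insert_subset_iff]
  tauto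

lemma card_extensions (hA : A ⊆ W) (hAq : #A ≤ q) :
    #(extensions W q A) = (#W - #A).choose (q - #A) :=
  card_filter_powersetCard_subset A W q hA hAq

lemma extensions_nonempty (hA : A ⊆ W) (hAq : #A ≤ q) (hqW : q ≤ #W) :
    (extensions W q A).Nonempty := by
  rw [← card_pos, card_extensions hA hAq]
  exact Nat.choose_pos (by omega)

lemma sum_sum_extensions_insert {M : Type*} [AddCommMonoid M] (f : Finset α → M) :
    ∑ v ∈ W \ A, ∑ T ∈ extensions W q (insert v A), f T =
      (q - #A) • ∑ T ∈ extensions W q A, f T := by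
  simp_rw [extensions_insert, sum_filter]
  rw [sum_comm, smul_sum]
  refine sum_congr rfl fun T hT => ?_
  obtain ⟨⟨hTW, hTq⟩, hAT⟩ := mem_extensions.1 hT
  have : (W \ A).filter (· ∈ T) = T \ A := by
    ext v
    simp only [mem_filter, mem_sdiff]
    exact ⟨fun h => ⟨h.2, h.1.2⟩, fun h => ⟨⟨hTW h.1, h.2⟩, h.1⟩⟩
  rw [← sum_filter, this, sum_const, card_sdiff_of_subset hAT, hTq]

lemma expect_extensions_eq_expect_expect_insert (hA : A ⊆ W) (hAq : #A < q) (hqW : q ≤ #W)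
    (f : Finset α → ℝ) :
    𝔼 T ∈ extensions W q A, f T = 𝔼 v ∈ W \ A, 𝔼 T ∈ extensions W q (insert v A), f T := by
  have hcard : ∀ v ∈ W \ A,
      #(extensions W q (insert v A)) = (#W - #A - 1).choose (q - #A - 1) := by
    intro v hv
    obtain ⟨hvW, hvA⟩ := mem_sdiff.1 hv
    rw [card_extensions (insert_subset hvW hA) (by rw [card_insert_of_notMem hvA]; omega),
      card_insert_of_notMem hvA]
    rfl
  have hpascal : ((#W - #A : ℕ) : ℝ) * (#W - #A - 1).choose (q - #A - 1) =
      (q - #A : ℕ) * (#W - #A).choose (q - #A) := by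
    have h := Nat.add_one_mul_choose_eq (#W - #A - 1) (q - #A - 1)
    rw [Nat.sub_add_cancel (by omega), Nat.sub_add_cancel (by omega)] at h
    rw [mul_comm ((q - #A : ℕ) : ℝ)]
    exact_mod_cast h
  symm
  calc 𝔼 v ∈ W \ A, 𝔼 T ∈ extensions W q (insert v A), f T
      = 𝔼 v ∈ W \ A, (∑ T ∈ extensions W q (insert v A), f T) /
          (#W - #A - 1).choose (q - #A - 1) :=
        expect_congr rfl fun v hv => by rw [expect_eq_sum_div_card, hcard v hv]
    _ = (q - #A : ℕ) * (∑ T ∈ extensions W q A, f T) /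
          ((#W - #A : ℕ) * (#W - #A - 1).choose (q - #A - 1)) := by
        rw [expect_eq_sum_div_card, ← sum_div, sum_sum_extensions_insert, nsmul_eq_mul,
          card_sdiff_of_subset hA, div_div, mul_comm (((#W - #A : ℕ)) : ℝ)]
    _ = 𝔼 T ∈ extensions W q A, f T := by
        rw [hpascal, mul_div_mul_left _ _ (by exact_mod_cast (Nat.sub_pos_of_lt hAq).ne'),
          expect_eq_sum_div_card, card_extensions hA hAq.le]

lemma map_swap_mem_extensions_insert {v w : α} (hv : v ∈ W \ A) (hw : w ∈ W \ A)
    (hT : T ∈ extensions W q (insert v A)) :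
    T.map (Equiv.swap v w).toEmbedding ∈ extensions W q (insert w A) := by
  obtain ⟨hvW, hvA⟩ := mem_sdiff.1 hv
  obtain ⟨hwW, hwA⟩ := mem_sdiff.1 hw
  obtain ⟨⟨hTW, hTq⟩, hvAT⟩ := mem_extensions.1 hT
  rw [insert_subset_iff] at hvAT
  refine mem_extensions.2 ⟨⟨fun x hx => ?_, by rw [card_map, hTq]⟩, insert_subset_iff.2 ⟨?_, ?_⟩⟩
  · rw [mem_map_equiv, Equiv.symm_swap] at hx
    rcases eq_or_ne x v with rfl | hxv
    · exact hvW
    rcases eq_or_ne x w with rfl | hxw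
    · exact hwW
    rw [Equiv.swap_apply_of_ne_of_ne hxv hxw] at hx
    exact hTW hx
  · rw [mem_map_equiv, Equiv.symm_swap, Equiv.swap_apply_right]
    exact hvAT.1
  · intro a ha
    rw [mem_map_equiv, Equiv.symm_swap,
      Equiv.swap_apply_of_ne_of_ne (ne_of_mem_of_not_mem ha hvA) (ne_of_mem_of_not_mem ha hwA)]
    exact hvAT.2 ha

lemma expect_extensions_insert_eq_expect_map_swap {v w : α} (hv : v ∈ W \ A) (hw : w ∈ W \ A)
    (g : Finset α → ℝ) :
    𝔼 T ∈ extensions W q (insert w A), g T =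
      𝔼 T ∈ extensions W q (insert v A), g (T.map (Equiv.swap v w).toEmbedding) := by
  have hinv : ∀ T : Finset α, (T.map (Equiv.swap v w).toEmbedding).map
      (Equiv.swap v w).toEmbedding = T := fun T => by
    ext x
    simp only [mem_map_equiv, Equiv.symm_swap, Equiv.swap_apply_self]
  refine (expect_nbij' _ _ (fun T hT => map_swap_mem_extensions_insert hv hw hT)
    (fun T hT => ?_) (fun T _ => hinv T) (fun T _ => hinv T) fun _ _ => rfl).symm
  rw [Equiv.swap_comm]
  exact map_swap_mem_extensions_insert hw hv hT

lemma abs_expect_extensions_insert_sub_le {v w : α} (hv : v ∈ W \ A) (hw : w ∈ W \ A)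
    {g : Finset α → ℝ} {c : ℝ} (hne : (extensions W q (insert v A)).Nonempty)
    (hg : ∀ T ∈ W.powersetCard q, |g T - g (T.map (Equiv.swap v w).toEmbedding)| ≤ c) :
    |𝔼 T ∈ extensions W q (insert v A), g T - 𝔼 T ∈ extensions W q (insert w A), g T| ≤ c := by
  rw [expect_extensions_insert_eq_expect_map_swap hv hw, ← expect_sub_distrib]
  refine (abs_expect_le _ _).trans (expect_le hne fun T hT => hg T ?_)
  exact mem_powersetCard.2 (mem_extensions.1 hT).1

lemma expect_extensions_exp_mul_le (hqW : q ≤ #W) {g : Finset α → ℝ} {c : ℝ}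
    (hg : ∀ T ∈ W.powersetCard q, ∀ v ∈ W, ∀ w ∈ W,
      |g T - g (T.map (Equiv.swap v w).toEmbedding)| ≤ c) (t : ℝ) (j : ℕ) :
    ∀ A ⊆ W, #A + j = q →
      𝔼 T ∈ extensions W q A, exp (t * g T) ≤
        exp (t * (𝔼 T ∈ extensions W q A, g T) + j * (t ^ 2 * c ^ 2 / 8)) := by
  induction j with
  | zero =>
    intro A hA hAq
    simp [extensions_of_card_eq hA hAq]
  | succ j ih =>
    intro A hA hAq
    have hAq' : #A < q := by omega
    have hB : (W \ A).Nonempty := by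
      rw [← card_pos, card_sdiff_of_subset hA]
      omega
    have hins : ∀ v ∈ W \ A, insert v A ⊆ W ∧ #(insert v A) + j = q := fun v hv =>
      ⟨insert_subset (mem_sdiff.1 hv).1 hA, by rw [card_insert_of_notMem (mem_sdiff.1 hv).2]; omega⟩
    -- Revealing one more element `v` moves the conditional mean `m v` by at most `c`,
    -- so Hoeffding's lemma bounds the step.
    set m : α → ℝ := fun v => 𝔼 T ∈ extensions W q (insert v A), g T
    have hspread : ∀ v ∈ W \ A, ∀ w ∈ W \ A, |m v - m w| ≤ c := fun v hv w hw =>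
      abs_expect_extensions_insert_sub_le hv hw
        (extensions_nonempty (hins v hv).1 (Nat.le.intro (hins v hv).2) hqW)
        fun T hT => hg T hT v (mem_sdiff.1 hv).1 w (mem_sdiff.1 hw).1
    calc 𝔼 T ∈ extensions W q A, exp (t * g T)
        = 𝔼 v ∈ W \ A, 𝔼 T ∈ extensions W q (insert v A), exp (t * g T) :=
          expect_extensions_eq_expect_expect_insert hA hAq' hqW _
      _ ≤ 𝔼 v ∈ W \ A, exp (t * m v + j * (t ^ 2 * c ^ 2 / 8)) :=
          expect_le_expect fun v hv => ih _ (hins v hv).1 (hins v hv).2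
      _ = exp (j * (t ^ 2 * c ^ 2 / 8)) * 𝔼 v ∈ W \ A, exp (t * m v) := by
          rw [mul_expect]
          exact expect_congr rfl fun v _ => by rw [← exp_add, add_comm]
      _ ≤ exp (j * (t ^ 2 * c ^ 2 / 8)) * exp (t * (𝔼 v ∈ W \ A, m v) + t ^ 2 * c ^ 2 / 8) := by
          gcongr
          exact expect_exp_mul_le_of_abs_sub_le hB hspread t
      _ = exp (t * (𝔼 T ∈ extensions W q A, g T) + ↑(j + 1) * (t ^ 2 * c ^ 2 / 8)) := by
          rw [expect_extensions_eq_expect_expect_insert hA hAq' hqW g, ← exp_add]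
          congr 1
          push_cast
          ring

theorem expect_exp_mul_le_of_abs_sub_map_swap_le (hqW : q ≤ #W) {g : Finset α → ℝ} {c : ℝ}
    (hg : ∀ T ∈ W.powersetCard q, ∀ v ∈ W, ∀ w ∈ W,
      |g T - g (T.map (Equiv.swap v w).toEmbedding)| ≤ c) (t : ℝ) :
    𝔼 T ∈ W.powersetCard q, exp (t * g T) ≤
      exp (t * (𝔼 T ∈ W.powersetCard q, g T) + q * (t ^ 2 * c ^ 2 / 8)) := by
  simpa [extensions_empty] using
    expect_extensions_exp_mul_le hqW hg t q ∅ (empty_subset W) (by simp)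

theorem card_filter_le_expect_sub_le (hqW : q ≤ #W) (hq : q ≠ 0) {g : Finset α → ℝ} {c s : ℝ}
    (hc : c ≠ 0) (hs : 0 ≤ s)
    (hg : ∀ T ∈ W.powersetCard q, ∀ v ∈ W, ∀ w ∈ W,
      |g T - g (T.map (Equiv.swap v w).toEmbedding)| ≤ c) :
    (#((W.powersetCard q).filter fun T => g T ≤ 𝔼 T ∈ W.powersetCard q, g T - s) : ℝ) ≤
      exp (-(2 * s ^ 2 / (q * c ^ 2))) * (#W).choose q := by
  set P := W.powersetCard q
  set m := 𝔼 T ∈ P, g T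
  -- the minimiser of `-lam * s + q * (lam ^ 2 * c ^ 2 / 8)`
  set lam := 4 * s / (q * c ^ 2)
  have hlam : 0 ≤ lam := by positivity
  have hexponent : -(lam * m) + q * (lam ^ 2 * c ^ 2 / 8) + lam * (m - s) =
      -(2 * s ^ 2 / (q * c ^ 2)) := by
    simp only [lam]
    field_simp
    ring
  have hchernoff :
      ∑ T ∈ P, exp (-(lam * g T)) ≤ #P * exp (-(lam * m) + q * (lam ^ 2 * c ^ 2 / 8)) := by
    rw [← card_smul_expect, nsmul_eq_mul]
    gcongr
    simpa [neg_mul, neg_sq] using expect_exp_mul_le_of_abs_sub_map_swap_le hqW hg (-lam)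
  calc (#(P.filter fun T => g T ≤ m - s) : ℝ)
      = #(P.filter fun T => g T ≤ m - s) * exp (-(lam * (m - s))) * exp (lam * (m - s)) := by
        rw [mul_assoc, ← exp_add, neg_add_cancel, exp_zero, mul_one]
    _ ≤ #P * exp (-(lam * m) + q * (lam ^ 2 * c ^ 2 / 8)) * exp (lam * (m - s)) :=
        mul_le_mul_of_nonneg_right ((card_filter_mul_exp_le_sum P g hlam (m - s)).trans hchernoff)
          (exp_pos _).le
    _ = exp (-(2 * s ^ 2 / (q * c ^ 2))) * (#W).choose q := by
        rw [mul_assoc, ← exp_add, hexponent, card_powersetCard, mul_comm]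

end Slice

section EdgeCount

variable {α : Type*} [DecidableEq α] {F : Finset (Finset α)} {r : ℕ}

lemma card_filter_subset_le_add_choose (hF : ∀ e ∈ F, #e = r) {T T' : Finset α} {v : α}
    (hv : v ∈ T) (hT : T.erase v ⊆ T') :
    #(F.filter (· ⊆ T)) ≤ #(F.filter (· ⊆ T')) + (#T - 1).choose (r - 1) := by
  have hdeg : #(F.filter fun e => e ⊆ T ∧ v ∈ e) ≤ (#T - 1).choose (r - 1) := by
    rw [← card_erase_of_mem hv, ← card_powersetCard]
    refine card_le_card_of_injOn (·.erase v) (fun e he => ?_) fun e he e' he' h => ?_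
    · obtain ⟨heF, heT, hve⟩ := mem_filter.1 he
      exact mem_powersetCard.2 ⟨erase_subset_erase v heT, by rw [card_erase_of_mem hve, hF e heF]⟩
    · rw [← insert_erase (mem_filter.1 he).2.2, ← insert_erase (mem_filter.1 he').2.2]
      exact congrArg (insert v) h
  have hsplit : F.filter (· ⊆ T) ⊆ F.filter (· ⊆ T') ∪ F.filter fun e => e ⊆ T ∧ v ∈ e := by
    intro e he
    obtain ⟨heF, heT⟩ := mem_filter.1 he
    by_cases hve : v ∈ e
    · exact mem_union_right _ (mem_filter.2 ⟨heF, heT, hve⟩)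
    · exact mem_union_left _ (mem_filter.2 ⟨heF, (subset_erase.2 ⟨heT, hve⟩).trans hT⟩)
  exact (card_le_card hsplit).trans ((card_union_le _ _).trans (by gcongr))

lemma abs_card_filter_subset_sub_le (hF : ∀ e ∈ F, #e = r) {T T' : Finset α} {v w : α}
    (hv : v ∈ T) (hw : w ∈ T') (hTT' : T.erase v ⊆ T') (hT'T : T'.erase w ⊆ T)
    (hcard : #T' = #T) :
    |(#(F.filter (· ⊆ T)) : ℝ) - #(F.filter (· ⊆ T'))| ≤ (#T - 1).choose (r - 1) := by
  have h₁ := card_filter_subset_le_add_choose hF hv hTT'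
  have h₂ := card_filter_subset_le_add_choose hF hw hT'T
  rw [hcard] at h₂
  rw [abs_sub_le_iff, sub_le_iff_le_add', sub_le_iff_le_add']
  exact ⟨by exact_mod_cast h₁, by exact_mod_cast h₂⟩

lemma abs_card_filter_subset_sub_map_swap_le (hF : ∀ e ∈ F, #e = r) (T : Finset α) (v w : α) :
    |(#(F.filter (· ⊆ T)) : ℝ) - #(F.filter (· ⊆ T.map (Equiv.swap v w).toEmbedding))| ≤
      (#T - 1).choose (r - 1) := by
  have key : ∀ v w, v ∈ T → |(#(F.filter (· ⊆ T)) : ℝ) -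
      #(F.filter (· ⊆ T.map (Equiv.swap v w).toEmbedding))| ≤ (#T - 1).choose (r - 1) := by
    intro v w hv
    refine abs_card_filter_subset_sub_le hF hv (w := w) ?_ (fun x hx => ?_) (fun x hx => ?_)
      (card_map _)
    · rwa [mem_map_equiv, Equiv.symm_swap, Equiv.swap_apply_right]
    · obtain ⟨hxv, hxT⟩ := mem_erase.1 hx
      rw [mem_map_equiv, Equiv.symm_swap]
      rcases eq_or_ne x w with rfl | hxw
      · rwa [Equiv.swap_apply_right]
      · rwa [Equiv.swap_apply_of_ne_of_ne hxv hxw]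
    · obtain ⟨hxw, hxT⟩ := mem_erase.1 hx
      rw [mem_map_equiv, Equiv.symm_swap] at hxT
      rcases eq_or_ne x v with rfl | hxv
      · exact hv
      · rwa [Equiv.swap_apply_of_ne_of_ne hxv hxw] at hxT
  by_cases hv : v ∈ T
  · exact key v w hv
  by_cases hw : w ∈ T
  · rw [Equiv.swap_comm]
    exact key w v hw
  have hfix : T.map (Equiv.swap v w).toEmbedding = T := by
    ext x
    rw [mem_map_equiv, Equiv.symm_swap]
    rcases eq_or_ne x v with rfl | hxv
    · rw [Equiv.swap_apply_left]; exact iff_of_false hw hv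
    rcases eq_or_ne x w with rfl | hxw
    · rw [Equiv.swap_apply_right]; exact iff_of_false hv hw
    rw [Equiv.swap_apply_of_ne_of_ne hxv hxw]
  rw [hfix, sub_self, abs_zero]
  positivity

variable {W : Finset α} {q : ℕ}

lemma sum_card_filter_subset_powersetCard (hF : ∀ e ∈ F, e ⊆ W ∧ #e = r) (hrq : r ≤ q) :
    ∑ T ∈ W.powersetCard q, #(F.filter (· ⊆ T)) = #F * (#W - r).choose (q - r) := by
  simp_rw [card_filter]
  rw [sum_comm, sum_congr rfl fun e he => ?_, sum_const, smul_eq_mul]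
  obtain ⟨heW, her⟩ := hF e he
  rw [← card_filter, card_filter_powersetCard_subset e W q heW (her ▸ hrq), her]

lemma expect_card_filter_subset_mul_choose (hF : ∀ e ∈ F, e ⊆ W ∧ #e = r) (hrq : r ≤ q)
    (hqW : q ≤ #W) :
    (𝔼 T ∈ W.powersetCard q, (#(F.filter (· ⊆ T)) : ℝ)) * (#W).choose r = #F * q.choose r := by
  have hpos : ((#W).choose q : ℝ) ≠ 0 := by exact_mod_cast (Nat.choose_pos hqW).ne'
  rw [expect_eq_sum_div_card, card_powersetCard, ← Nat.cast_sum,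
    sum_card_filter_subset_powersetCard hF hrq, div_mul_eq_mul_div, div_eq_iff hpos]
  norm_cast
  rw [mul_assoc, mul_comm ((#W - r).choose _), ← Nat.choose_mul hrq, mul_comm ((#W).choose q),
    mul_assoc]

theorem card_filter_card_filter_subset_lt_le (hF : ∀ e ∈ F, e ⊆ W ∧ #e = r) (hr : 0 < r)
    (hrq : r ≤ q) {μ η : ℝ} (hη : 0 < η) (hFcard : (μ + η) * (#W).choose r ≤ #F) :
    (#((W.powersetCard q).filter fun T =>
        (#(F.filter (· ⊆ T)) : ℝ) < (μ + η / 2) * q.choose r) : ℝ) ≤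
      exp (-(η ^ 2 * q / (2 * r ^ 2))) * (#W).choose q := by
  rcases lt_or_ge #W q with hWq | hqW
  · rw [powersetCard_eq_empty.2 hWq, filter_empty, card_empty, Nat.cast_zero]
    positivity
  set C := (q.choose r : ℝ)
  set c := ((q - 1).choose (r - 1) : ℝ)
  have hC : 0 < C := by simp only [C]; exact_mod_cast Nat.choose_pos hrq
  have hc : 0 < c := by simp only [c]; exact_mod_cast Nat.choose_pos (by omega)
  have hqc : (q : ℝ) * c = r * C := by
    have h := Nat.add_one_mul_choose_eq (q - 1) (r - 1)
    rw [Nat.sub_add_cancel (by omega), Nat.sub_add_cancel hr] at h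
    simp only [c, C]
    rw [mul_comm (r : ℝ)]
    exact_mod_cast h
  have hmean : (μ + η) * C ≤ 𝔼 T ∈ W.powersetCard q, (#(F.filter (· ⊆ T)) : ℝ) := by
    have hN : (0 : ℝ) < (#W).choose r := by exact_mod_cast Nat.choose_pos (hrq.trans hqW)
    refine le_of_mul_le_mul_right ?_ hN
    rw [expect_card_filter_subset_mul_choose hF hrq hqW, mul_right_comm]
    exact mul_le_mul_of_nonneg_right hFcard hC.le
  have hsub : (W.powersetCard q).filter (fun T => (#(F.filter (· ⊆ T)) : ℝ) < (μ + η / 2) * C) ⊆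
      (W.powersetCard q).filter fun T => (#(F.filter (· ⊆ T)) : ℝ) ≤
        𝔼 T ∈ W.powersetCard q, (#(F.filter (· ⊆ T)) : ℝ) - η * C / 2 :=
    monotone_filter_right _ fun T _ hT => by linarith
  refine (Nat.cast_le.2 (card_le_card hsub)).trans ?_
  have hmcd := card_filter_le_expect_sub_le (g := fun T => (#(F.filter (· ⊆ T)) : ℝ))
    (s := η * C / 2) hqW (by omega) hc.ne' (by positivity) fun T hT v _ w _ => by
      have h := abs_card_filter_subset_sub_map_swap_le (fun e he => (hF e he).2) T v w
      rwa [(mem_powersetCard.1 hT).2] at h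
  refine hmcd.trans_eq (congrArg (exp · * _) ?_)
  have hq : (0 : ℝ) < q := by exact_mod_cast hr.trans_le hrq
  rw [neg_inj, div_eq_div_iff (by positivity) (by positivity)]
  linear_combination (-η ^ 2 * (q * c + r * C)) * hqc

end EdgeCount

section Link

variable {α : Type*} [DecidableEq α]

def link (F : Finset (Finset α)) (X : Finset α) : Finset (Finset α) :=
  (F.filter (X ⊆ ·)).image (· \ X)

variable {F : Finset (Finset α)} {W X : Finset α} {k : ℕ}

lemma card_link : #(link F X) = #(F.filter (X ⊆ ·)) :=
  card_image_of_injOn fun _ he _ he' => superset_injOn_sdiff X (mem_filter.1 he).2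
    (mem_filter.1 he').2

lemma subset_sdiff_and_card_of_mem_link (hF : ∀ e ∈ F, e ⊆ W ∧ #e = k) :
    ∀ f ∈ link F X, f ⊆ W \ X ∧ #f = k - #X := by
  intro f hf
  obtain ⟨e, he, rfl⟩ := mem_image.1 hf
  obtain ⟨heF, hXe⟩ := mem_filter.1 he
  exact ⟨sdiff_subset_sdiff (hF e heF).1 subset_rfl, by rw [card_sdiff_of_subset hXe, (hF e heF).2]⟩

lemma card_filter_link_subset (T : Finset α) :
    #((link F X).filter (· ⊆ T)) = #(F.filter fun e => X ⊆ e ∧ e ⊆ T ∪ X) := by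
  rw [link, filter_image, filter_filter]
  refine (card_image_of_injOn fun _ he _ he' => superset_injOn_sdiff X (mem_filter.1 he).2.1
    (mem_filter.1 he').2.1).trans ?_
  exact congrArg card (filter_congr fun _ _ => and_congr_right fun _ => sdiff_le_iff')

lemma card_filter_extensions (hX : X ⊆ W) {Q : ℕ} (hXQ : #X ≤ Q) (p : Finset α → Prop)
    [DecidablePred p] :
    #((extensions W Q X).filter p) = #(((W \ X).powersetCard (Q - #X)).filter (p <| · ∪ X)) := by
  rw [extensions, filter_powersetCard_subset X W Q hX hXQ, filter_image]
  refine card_image_of_injOn fun T hT T' hT' h => ?_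
  have hdisj : ∀ {T}, T ∈ ((W \ X).powersetCard (Q - #X)).filter (p <| · ∪ X) → Disjoint T X :=
    fun hT => disjoint_of_subset_left (mem_powersetCard.1 (mem_filter.1 hT).1).1 sdiff_disjoint
  rw [← union_sdiff_cancel_right (hdisj hT), ← union_sdiff_cancel_right (hdisj hT')]
  exact congrArg (· \ X) h

theorem card_filter_extensions_lt_le {Q : ℕ} (hG : ∀ e ∈ F, e ⊆ W ∧ #e = k) (hX : X ⊆ W)
    (hXk : #X < k) (hkQ : k ≤ Q) {μ η : ℝ} (hη : 0 < η)
    (hdeg : (μ + η) * (#W - #X).choose (k - #X) ≤ #(F.filter (X ⊆ ·))) :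
    (#((extensions W Q X).filter fun S =>
      (#(F.filter fun e => X ⊆ e ∧ e ⊆ S) : ℝ) < (μ + η / 2) * (Q - #X).choose (k - #X)) : ℝ) ≤
      exp (-(η ^ 2 * (Q - #X : ℕ) / (2 * (k - #X : ℕ) ^ 2))) * (#W - #X).choose (Q - #X) := by
  rw [card_filter_extensions hX (by omega)]
  simp_rw [← card_filter_link_subset]
  rw [← card_sdiff_of_subset hX]
  exact card_filter_card_filter_subset_lt_le (subset_sdiff_and_card_of_mem_link hG) (by omega)
    (by omega) hη (by rwa [card_link, card_sdiff_of_subset hX])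

end Link

lemma sum_le_card_filter_mul_add_card_mul {ι : Type*} (s : Finset ι) (p : ι → Prop)
    [DecidablePred p] {f : ι → ℝ} {M a : ℝ} (ha : 0 ≤ a) (hM : ∀ i ∈ s, f i ≤ M)
    (hp : ∀ i ∈ s, ¬p i → f i ≤ a) :
    ∑ i ∈ s, f i ≤ #(s.filter p) * M + #s * a := by
  rw [← sum_filter_add_sum_filter_not s p]
  refine add_le_add ?_ ?_
  · refine (sum_le_card_nsmul _ _ _ fun i hi => hM i (mem_filter.1 hi).1).trans_eq ?_
    rw [nsmul_eq_mul]
  · refine (sum_le_card_nsmul _ _ _ fun i hi => hp i (mem_filter.1 hi).1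
      (mem_filter.1 hi).2).trans ?_
    rw [nsmul_eq_mul]
    exact mul_le_mul_of_nonneg_right (by exact_mod_cast card_filter_le _ _) ha

lemma sub_le_card_filter_of_card_filter_not_le {ι : Type*} {s : Finset ι} {p : ι → Prop}
    [DecidablePred p] {b : ℝ} (h : (#(s.filter fun i => ¬p i) : ℝ) ≤ b) :
    #s - b ≤ #(s.filter p) := by
  rw [← card_filter_add_card_filter_not p, Nat.cast_add]
  linarith

lemma card_filter_not_forall_le_sum {α : Type*} [DecidableEq α] (W : Finset α) (Q ℓ : ℕ)
    (d : Finset α → Finset α → ℝ) (θ : ℝ)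
    [DecidablePred fun S : Finset α => ∀ X ∈ S.powersetCard ℓ, θ ≤ d X S] :
    #((W.powersetCard Q).filter fun S => ¬∀ X ∈ S.powersetCard ℓ, θ ≤ d X S) ≤
      ∑ X ∈ W.powersetCard ℓ, #((extensions W Q X).filter fun S => d X S < θ) := by
  refine (card_le_card fun S hS => ?_).trans card_biUnion_le
  obtain ⟨hSQ, hSbad⟩ := mem_filter.1 hS
  simp only [not_forall, not_le] at hSbad
  obtain ⟨X, hXS, hX⟩ := hSbad
  obtain ⟨hXS, hXℓ⟩ := mem_powersetCard.1 hXS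
  exact mem_biUnion.2 ⟨X, mem_powersetCard.2 ⟨hXS.trans (mem_powersetCard.1 hSQ).1, hXℓ⟩,
    mem_filter.2 ⟨mem_extensions.2 ⟨mem_powersetCard.1 hSQ, hXS⟩, hX⟩⟩

lemma exp_neg_sq_mul_sub_div_le {k ℓ Q : ℕ} (hℓk : ℓ < k) (hQ : 2 * ℓ ≤ Q) (η : ℝ) :
    exp (-(η ^ 2 * (Q - ℓ : ℕ) / (2 * (k - ℓ : ℕ) ^ 2))) ≤ exp (-(η ^ 2) * Q / (4 * k ^ 2)) := by
  have hQℓ : (Q : ℝ) / 2 ≤ (Q - ℓ : ℕ) := by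
    have : (2 * ℓ : ℝ) ≤ Q := by exact_mod_cast hQ
    rw [Nat.cast_sub (by omega)]
    linarith
  have hkℓ : 0 < ((k - ℓ : ℕ) : ℝ) := by exact_mod_cast Nat.sub_pos_of_lt hℓk
  have hk : ((k - ℓ : ℕ) : ℝ) ≤ k := by exact_mod_cast Nat.sub_le k ℓ
  rw [exp_le_exp, neg_mul, neg_div, neg_le_neg_iff]
  calc η ^ 2 * Q / (4 * k ^ 2) = η ^ 2 * (Q / 2) / (2 * k ^ 2) := by ring
    _ ≤ η ^ 2 * (Q - ℓ : ℕ) / (2 * (k - ℓ : ℕ) ^ 2) := by gcongr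

theorem card_filter_not_forall_codegree_le {V : Type*} [Fintype V] [DecidableEq V]
    {k ℓ Q : ℕ} {G : Finset (Finset V)} (hG : ∀ e ∈ G, #e = k) {δ μ η : ℝ} (hη : 0 < η)
    (hℓk : ℓ < k) (hkQ : k ≤ Q) (hQ : 2 * ℓ ≤ Q)
    (hbad : (#((powersetCard ℓ univ).filter fun X => (#(G.filter (X ⊆ ·)) : ℝ) <
      (μ + η) * (Fintype.card V - ℓ).choose (k - ℓ)) : ℝ) ≤ δ * (Fintype.card V).choose ℓ) :
    (#((powersetCard Q univ).filter fun S => ¬∀ X ∈ S.powersetCard ℓ,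
      (μ + η / 2) * (Q - ℓ).choose (k - ℓ) ≤ (#(G.filter fun e => X ⊆ e ∧ e ⊆ S) : ℝ)) : ℝ) ≤
      (δ + exp (-(η ^ 2) * Q / (4 * k ^ 2))) * ((Fintype.card V).choose Q * Q.choose ℓ) := by
  set ε := exp (-(η ^ 2) * Q / (4 * k ^ 2))
  set θ := (μ + η / 2) * ((Q - ℓ).choose (k - ℓ) : ℝ)
  set R := ((Fintype.card V - ℓ).choose (Q - ℓ) : ℝ)
  have hchoose : ((Fintype.card V).choose ℓ : ℝ) * R = (Fintype.card V).choose Q * Q.choose ℓ := by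
    simp only [R]
    exact_mod_cast (Nat.choose_mul (n := Fintype.card V) (by omega : ℓ ≤ Q)).symm
  have hlow : ∀ X ∈ powersetCard ℓ univ, (#((extensions univ Q X).filter fun S =>
      (#(G.filter fun e => X ⊆ e ∧ e ⊆ S) : ℝ) < θ) : ℝ) ≤ R := by
    intro X hX
    obtain ⟨-, rfl⟩ := mem_powersetCard.1 hX
    calc _ ≤ (#(extensions univ Q X) : ℝ) := by exact_mod_cast card_filter_le _ _
      _ = R := by rw [card_extensions (subset_univ X) (by omega), card_univ]
  have hlow_good : ∀ X ∈ powersetCard ℓ univ,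
      ¬(#(G.filter (X ⊆ ·)) : ℝ) < (μ + η) * (Fintype.card V - ℓ).choose (k - ℓ) →
      (#((extensions univ Q X).filter fun S =>
        (#(G.filter fun e => X ⊆ e ∧ e ⊆ S) : ℝ) < θ) : ℝ) ≤ ε * R := by
    intro X hX hXgood
    obtain ⟨-, rfl⟩ := mem_powersetCard.1 hX
    have h := card_filter_extensions_lt_le (W := univ) (Q := Q)
      (fun e he => ⟨subset_univ e, hG e he⟩) (subset_univ X) hℓk hkQ hη
      (by rw [card_univ]; exact not_lt.1 hXgood)
    rw [card_univ] at h
    exact h.trans (mul_le_mul_of_nonneg_right (exp_neg_sq_mul_sub_div_le hℓk hQ η) (by positivity))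
  calc _ ≤ ∑ X ∈ powersetCard ℓ univ, (#((extensions univ Q X).filter fun S =>
        (#(G.filter fun e => X ⊆ e ∧ e ⊆ S) : ℝ) < θ) : ℝ) := by
        have := card_filter_not_forall_le_sum univ Q ℓ
          (fun X S => (#(G.filter fun e => X ⊆ e ∧ e ⊆ S) : ℝ)) θ
        exact (Nat.cast_le.2 this).trans_eq (Nat.cast_sum _ _)
    _ ≤ _ := sum_le_card_filter_mul_add_card_mul _ _ (by positivity) hlow hlow_good
    _ ≤ δ * (Fintype.card V).choose ℓ * R + (Fintype.card V).choose ℓ * (ε * R) := by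
        rw [card_powersetCard, card_univ]
        gcongr
    _ = (δ + ε) * ((Fintype.card V).choose Q * Q.choose ℓ) := by rw [← hchoose]; ring

open scoped Classical in
theorem random_subset_codegree_general {V : Type*} [Fintype V] [DecidableEq V]
    (k ℓ Q n : ℕ) (hn : n = Fintype.card V)
    (G : Finset (Finset V)) (hG : ∀ e ∈ G, e.card = k)
    (δ μ η : ℝ) (hη : 0 < η)
    (hℓk : ℓ < k) (hkQ : k ≤ Q) (hQ : 2 * ℓ ≤ Q)
    (hbad : (((Finset.powersetCard ℓ (Finset.univ : Finset V)).filter fun X =>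
        ((G.filter fun e => X ⊆ e).card : ℝ) <
          (μ + η) * ((n - ℓ).choose (k - ℓ))).card : ℝ) ≤ δ * n.choose ℓ) :
    (1 - (Q.choose ℓ : ℝ) * (δ + Real.exp (-(η ^ 2) * Q / (4 * k ^ 2)))) *
        n.choose Q ≤
      (((Finset.powersetCard Q (Finset.univ : Finset V)).filter fun S =>
        ∀ X ∈ Finset.powersetCard ℓ S,
          (μ + η / 2) * ((Q - ℓ).choose (k - ℓ)) ≤
            ((G.filter fun e => X ⊆ e ∧ e ⊆ S).card : ℝ)).card : ℝ) := by
  subst hn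
  have h := sub_le_card_filter_of_card_filter_not_le
    (card_filter_not_forall_codegree_le hG hη hℓk hkQ hQ hbad)
  rw [card_powersetCard, card_univ] at h
  calc _ = ((Fintype.card V).choose Q : ℝ) - (δ + exp (-(η ^ 2) * Q / (4 * k ^ 2))) *
        ((Fintype.card V).choose Q * Q.choose ℓ) := by ring
    _ ≤ _ := h

open scoped Classical in
/-- If at most `δ·(n choose ℓ)` of the `ℓ`-sets of vertices of a `k`-graph `G`
have degree less than `(μ + η)·((n-ℓ) choose (k-ℓ))`, and `Q ≥ 2ℓ`, then the
number of `Q`-subsets `S` of vertices for which the induced subgraph `G[S]` has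
minimum `ℓ`-degree at least `(μ + η/2)·((Q-ℓ) choose (k-ℓ))` is at least a
`1 − (Q choose ℓ)·(δ + e^{−η²Q/(4k²)})` proportion of all `Q`-subsets. -/
theorem random_subset_codegree {V : Type*} [Fintype V] [DecidableEq V]
    (k ℓ Q n : ℕ) (hn : n = Fintype.card V)
    (G : Finset (Finset V)) (hG : ∀ e ∈ G, e.card = k)
    (δ μ η : ℝ) (hδ : 0 < δ) (hμ : 0 < μ) (hη : 0 < η)
    (hℓk : ℓ < k) (hkQ : k ≤ Q) (hQ : 2 * ℓ ≤ Q)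
    (hbad : (((Finset.powersetCard ℓ (Finset.univ : Finset V)).filter fun X =>
        ((G.filter fun e => X ⊆ e).card : ℝ) <
          (μ + η) * ((n - ℓ).choose (k - ℓ))).card : ℝ) ≤ δ * n.choose ℓ) :
    (1 - (Q.choose ℓ : ℝ) * (δ + Real.exp (-(η ^ 2) * Q / (4 * k ^ 2)))) *
        n.choose Q ≤
      (((Finset.powersetCard Q (Finset.univ : Finset V)).filter fun S =>
        ∀ X ∈ Finset.powersetCard ℓ S,
          (μ + η / 2) * ((Q - ℓ).choose (k - ℓ)) ≤
            ((G.filter fun e => X ⊆ e ∧ e ⊆ S).card : ℝ)).card : ℝ) :=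
  random_subset_codegree_general k ℓ Q n hn G hG δ μ η hη hℓk hkQ hQ hbad
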